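/- arXiv:1611.00840 — 7 statements merged into one kernel-verified Lean document; each statement's English description precedes it below -/
import Mathlib

section
/- Let G be a graph on n vertices and S a minimal connected dominating set of G with |S| ≥ (4/10)n. Then the number of vertices v of G with d_S(v) ≤ 2 is at least n/20, where d_S(v) denotes the number of neighbors of v in S. -/
/-!
Let `H = G[S]`. If `x` is not a cut vertex of `H`, then `S \ {x}` is still connected, so by
minimality it does not dominate: `x` has a private neighbour outside `S`, whose `S`-degree is one.
Vertices of degree at most two in `H` have `S`-degree at most two. So it suffices that in every
connected graph at least a sixth of the vertices are non-cut or have degree at most two; then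
`|L(S)| ≥ |S| / 6 ≥ n / 15`.

For this take a spanning arborescence with the most leaves and, among those, the least total depth.
Its leaves, and its root if that has a single child, are non-cut vertices. A vertex with a single
child and degree at least three has a further neighbour; exchanging tree edges shows that this
neighbour lies outside its subtree and that then its parent or grandparent has two children. Hence
the vertices not covered are charged to branching vertices, of which there are fewer than leaves.
-/

/-- S is a connected dominating set of G: every vertex outside S has a neighbor in S,
and the subgraph induced by S is connected. -/
def IsCDS {V : Type*} (G : SimpleGraph V) (S : Set V) : Prop :=
  (∀ v ∉ S, ∃ u ∈ S, G.Adj v u) ∧ (G.induce S).Connected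

/-- S is a minimal connected dominating set: no proper subset is a connected dominating set. -/
def IsMinCDS {V : Type*} (G : SimpleGraph V) (S : Set V) : Prop :=
  IsCDS G S ∧ ∀ S' ⊂ S, ¬ IsCDS G S'

/-- The S-degree of v: the number of neighbors of v lying in S. -/
noncomputable def sDegree {V : Type*} (G : SimpleGraph V) (S : Set V) (v : V) : ℕ :=
  {u ∈ S | G.Adj v u}.ncard

section

open Finset Function

variable {α : Type*}

/-- A spanning tree of `H` rooted at `r`, given by its parent map `f`. -/
structure IsArborescence (H : SimpleGraph α) (r : α) (f : α → α) : Prop where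
  map_root : f r = r
  adj_map : ∀ v, v ≠ r → H.Adj v (f v)
  exists_iterate_eq_root : ∀ v, ∃ k, f^[k] v = r

namespace Arborescence

variable {r x y v : α} {f : α → α}

noncomputable def depth (r : α) (f : α → α) (v : α) : ℕ := sInf {k | f^[k] v = r}

lemma depth_le {k : ℕ} (h : f^[k] v = r) : depth r f v ≤ k := Nat.sInf_le h

lemma depth_root : depth r f r = 0 := Nat.le_zero.mp (depth_le rfl)

lemma iterate_update_of_forall_ne [DecidableEq α] (h : ∀ j, f^[j] v ≠ x) (k : ℕ) :
    (update f x y)^[k] v = f^[k] v := by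
  induction k generalizing v with
  | zero => rfl
  | succ k ih =>
    have hv : v ≠ x := h 0
    rw [iterate_succ_apply, iterate_succ_apply, update_of_ne hv,
      ih fun j => by simpa only [iterate_succ_apply] using h (j + 1)]

section Children

variable [Fintype α] [DecidableEq α] {u : α}

def children (r : α) (f : α → α) (v : α) : Finset α := {u | u ≠ r ∧ f u = v}

def childCount (r : α) (f : α → α) (v : α) : ℕ := #(children r f v)

def leaves (r : α) (f : α → α) : Finset α := {v | childCount r f v = 0}

noncomputable def totalDepth (r : α) (f : α → α) : ℕ := ∑ v, depth r f v

lemma mem_children : u ∈ children r f v ↔ u ≠ r ∧ f u = v := by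
  simp [children]

lemma mem_leaves : v ∈ leaves r f ↔ ∀ u, u ≠ r → f u ≠ v := by
  simp [leaves, childCount, children, filter_eq_empty_iff]

lemma one_le_childCount_apply (hv : v ≠ r) : 1 ≤ childCount r f (f v) :=
  card_pos.mpr ⟨v, mem_children.mpr ⟨hv, rfl⟩⟩

lemma childCount_apply_eq_one_iff (hx : x ≠ r) :
    childCount r f (f x) = 1 ↔ ∀ u, u ≠ r → f u = f x → u = x := by
  have hx' : x ∈ children r f (f x) := mem_children.mpr ⟨hx, rfl⟩
  constructor
  · intro h u hu hfu
    exact card_le_one.mp h.le u (mem_children.mpr ⟨hu, hfu⟩) x hx'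
  · refine fun h => le_antisymm (card_le_one.mpr fun a ha b hb => ?_) (one_le_childCount_apply hx)
    rw [mem_children] at ha hb
    rw [h a ha.1 ha.2, h b hb.1 hb.2]

lemma card_filter_apply_eq_sum (p : α → Prop) [DecidablePred p] :
    #{v | v ≠ r ∧ p (f v)} = ∑ b with p b, childCount r f b := by
  rw [card_eq_sum_card_fiberwise (f := f) (t := {b | p b}) fun v hv => by simp_all]
  refine sum_congr rfl fun b hb => congrArg card ?_
  ext u
  simp only [mem_filter, mem_univ, true_and] at hb
  simp only [children, mem_filter, mem_univ, true_and]
  grind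

lemma sum_childCount : ∑ v, childCount r f v = Fintype.card α - 1 := by
  simpa [filter_ne', card_erase_of_mem] using
    (card_filter_apply_eq_sum (r := r) (f := f) fun _ => True).symm

lemma sum_childCount_branching_add_one [Nonempty α] :
    ∑ v with 2 ≤ childCount r f v, childCount r f v + 1 =
      #(leaves r f) + #{v | 2 ≤ childCount r f v} := by
  have key : ∑ v, (childCount r f v + (if childCount r f v = 0 then 1 else 0) +
      (if 2 ≤ childCount r f v then 1 else 0)) =
      ∑ v, (1 + if 2 ≤ childCount r f v then childCount r f v else 0) :=
    sum_congr rfl fun v _ => by split_ifs <;> omega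
  simp only [sum_add_distrib, sum_childCount, ← sum_filter, sum_const,
    card_univ, smul_eq_mul, mul_one] at key
  rw [leaves]
  have := Fintype.card_pos (α := α)
  omega

lemma card_filter_childCount_apply_eq_one_le (p : α → Prop) [DecidablePred p] :
    #{v | v ≠ r ∧ childCount r f (f v) = 1 ∧ p (f v)} ≤ #{u | p u} := by
  refine card_le_card_of_injOn f (fun v hv => by simp_all) fun v hv w hw hvw => ?_
  simp only [coe_filter, mem_univ, true_and, Set.mem_ofPred_eq] at hv hw
  exact ((childCount_apply_eq_one_iff hv.1).mp hv.2.1 w hw.1 hvw.symm).symm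

lemma mem_leaves_update (hx : x ≠ r) :
    v ∈ leaves r (update f x y) ↔ v ≠ y ∧ ∀ u, u ≠ r → u ≠ x → f u ≠ v := by
  rw [mem_leaves]
  constructor
  · intro h
    exact ⟨fun hvy => h x hx (by simp [hvy]), fun u hu hux => by simpa [hux] using h u hu⟩
  · rintro ⟨hvy, h⟩ u hu
    rcases eq_or_ne u x with rfl | hux
    · simpa using Ne.symm hvy
    · simpa [hux] using h u hu hux

end Children

end Arborescence

open Arborescence

lemma SimpleGraph.connected_induce_of_exists_adj_lt {H : SimpleGraph α} {s : Set α} {t : α}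
    (ht : t ∈ s) (μ : α → ℕ) (h : ∀ v ∈ s, v ≠ t → ∃ u ∈ s, H.Adj v u ∧ μ u < μ v) :
    (H.induce s).Connected := by
  have hreach : ∀ v (hv : v ∈ s), (H.induce s).Reachable ⟨v, hv⟩ ⟨t, ht⟩ := by
    intro v hv
    induction hd : μ v using Nat.strong_induction_on generalizing v with
    | _ n ih =>
      rcases eq_or_ne v t with rfl | hvt
      · rfl
      obtain ⟨u, hu, hadj, hlt⟩ := h v hv hvt
      exact SimpleGraph.Adj.reachable (G := H.induce s) (u := ⟨v, hv⟩) (v := ⟨u, hu⟩) hadj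
        |>.trans (ih _ (hd ▸ hlt) u hu rfl)
  rw [SimpleGraph.connected_iff]
  exact ⟨fun a b => (hreach a a.2).trans (hreach b b.2).symm, ⟨⟨t, ht⟩⟩⟩

namespace IsArborescence

variable {H : SimpleGraph α} {r x y v : α} {f g : α → α}

lemma iterate_depth (hf : IsArborescence H r f) (v : α) : f^[depth r f v] v = r :=
  Nat.sInf_mem (hf.exists_iterate_eq_root v)

lemma iterate_root (hf : IsArborescence H r f) (k : ℕ) : f^[k] r = r :=
  iterate_fixed hf.map_root k

lemma depth_eq_depth_add_one (hf : IsArborescence H r f) (hv : v ≠ r) :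
    depth r f v = depth r f (f v) + 1 := by
  have hle : depth r f v ≤ depth r f (f v) + 1 :=
    depth_le (by rw [iterate_succ_apply, hf.iterate_depth])
  obtain ⟨m, hm⟩ : ∃ m, depth r f v = m + 1 :=
    Nat.exists_eq_succ_of_ne_zero fun h => hv (by simpa [h] using hf.iterate_depth v)
  have hge : depth r f (f v) ≤ m := by
    have := hf.iterate_depth v
    rw [hm, iterate_succ_apply] at this
    exact depth_le this
  omega

lemma apply_ne_self (hf : IsArborescence H r f) (hv : v ≠ r) : f v ≠ v := fun h => by
  have := hf.depth_eq_depth_add_one hv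
  rw [h] at this
  omega

lemma apply_apply_ne_self (hf : IsArborescence H r f) (hv : v ≠ r) : f (f v) ≠ v := fun h => by
  rcases eq_or_ne (f v) r with hfv | hfv
  · exact hv (by rw [← h, hfv, hf.map_root])
  · have h1 := hf.depth_eq_depth_add_one hv
    have h2 := hf.depth_eq_depth_add_one hfv
    rw [h] at h2
    omega

lemma depth_add_of_iterate_eq (hf : IsArborescence H r f) (hx : x ≠ r) {k : ℕ}
    (h : f^[k] y = x) : depth r f x + k = depth r f y := by
  induction k generalizing y with
  | zero => simp_all
  | succ k ih =>
    have hy : y ≠ r := by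
      rintro rfl
      exact hx (h ▸ hf.iterate_root _)
    rw [iterate_succ_apply] at h
    rw [hf.depth_eq_depth_add_one hy, ← ih h]
    omega

lemma of_forall_eq_or_exists (hf : IsArborescence H r f) (hr : g r = r)
    (hadj : ∀ v, v ≠ r → H.Adj v (g v))
    (h : ∀ v, g v = f v ∨ ∃ k, g^[k] v = r) : IsArborescence H r g := by
  refine ⟨hr, hadj, fun v => ?_⟩
  obtain ⟨k, hk⟩ := hf.exists_iterate_eq_root v
  induction k generalizing v with
  | zero => exact ⟨0, hk⟩
  | succ k ih =>
    refine (h v).elim (fun hv => ?_) id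
    obtain ⟨m, hm⟩ := ih (f v) (by rwa [iterate_succ_apply] at hk)
    exact ⟨m + 1, by rwa [iterate_succ_apply, hv]⟩

lemma update [DecidableEq α] (hf : IsArborescence H r f) (hx : x ≠ r) (hadj : H.Adj x y)
    (hy : ∀ k, f^[k] y ≠ x) : IsArborescence H r (update f x y) := by
  refine hf.of_forall_eq_or_exists (by rw [update_of_ne hx.symm, hf.map_root]) ?_ fun v => ?_
  · intro v hv
    rcases eq_or_ne v x with rfl | hvx
    · simpa using hadj
    · simpa [update_of_ne hvx] using hf.adj_map v hv
  · rcases eq_or_ne v x with rfl | hvx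
    · refine Or.inr ⟨depth r f y + 1, ?_⟩
      rw [iterate_succ_apply, update_self, iterate_update_of_forall_ne hy, hf.iterate_depth]
    · exact Or.inl (update_of_ne hvx _ _)

lemma depth_le_depth_of_forall_lt (hf : IsArborescence H r f) (hg : IsArborescence H r g)
    (h : ∀ v, v ≠ r → depth r f (g v) < depth r f v) (v : α) : depth r g v ≤ depth r f v := by
  induction hd : depth r f v using Nat.strong_induction_on generalizing v with
  | _ n ih =>
    rcases eq_or_ne v r with rfl | hv
    · simp [depth_root]
    rw [hg.depth_eq_depth_add_one hv]
    have := ih _ (hd ▸ h v hv) (g v) rfl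
    have := h v hv
    omega

section Children

variable [Fintype α] [DecidableEq α]

lemma root_notMem_leaves (hf : IsArborescence H r f) (hv : v ≠ r) : r ∉ leaves r f := by
  simp only [mem_leaves, not_forall, not_not, exists_prop]
  obtain ⟨k, hk⟩ := hf.exists_iterate_eq_root v
  induction k generalizing v with
  | zero => exact absurd hk hv
  | succ k ih =>
    by_cases hfv : f v = r
    · exact ⟨v, hv, hfv⟩
    · exact ih hfv (by rwa [iterate_succ_apply] at hk)

lemma iterate_ne_apply_of_childCount_eq_one (hf : IsArborescence H r f) (hx : x ≠ r)
    (hfx : f x ≠ r) (hy : ∀ k, f^[k] y ≠ x) (hyfx : y ≠ f x)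
    (honly : childCount r f (f x) = 1) (k : ℕ) : f^[k] y ≠ f x := by
  rcases k with _ | k
  · exact hyfx
  · intro hk
    rw [iterate_succ_apply'] at hk
    have hkr : f^[k] y ≠ r := fun h => hfx (by rw [← hk, h, hf.map_root])
    exact hy k ((childCount_apply_eq_one_iff hx).mp honly _ hkr hk)

lemma exists_adj_ne_of_childCount_le_one [DecidableRel H.Adj] (hf : IsArborescence H r f)
    (hx : x ≠ r) (hc : childCount r f x ≤ 1) (hdeg : 3 ≤ H.degree x) :
    ∃ y, H.Adj x y ∧ y ≠ f x ∧ f y ≠ x := by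
  set T := insert (f x) (children r f x)
  have hT : #T ≤ 2 := (card_insert_le _ _).trans (by rw [childCount] at hc; omega)
  obtain ⟨y, hy⟩ : (H.neighborFinset x \ T).Nonempty := by
    have := le_card_sdiff T (H.neighborFinset x)
    rw [SimpleGraph.card_neighborFinset_eq_degree] at this
    exact card_pos.mp (by omega)
  simp only [T, mem_sdiff, mem_insert, SimpleGraph.mem_neighborFinset, mem_children, not_or,
    not_and] at hy
  refine ⟨y, hy.1, hy.2.1, fun hfy => hy.2.2 ?_ hfy⟩
  rintro rfl
  exact hx (hf.map_root ▸ hfy).symm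

lemma connected_induce_compl_of_mem_leaves (hf : IsArborescence H r f) (hx : x ≠ r)
    (hxl : x ∈ leaves r f) : (H.induce {x}ᶜ).Connected :=
  SimpleGraph.connected_induce_of_exists_adj_lt (Ne.symm hx) (depth r f) fun v _ hvr =>
    ⟨f v, mem_leaves.mp hxl v hvr, hf.adj_map v hvr,
      by rw [hf.depth_eq_depth_add_one hvr]; omega⟩

lemma connected_induce_compl_root (hf : IsArborescence H r f) (hr : childCount r f r = 1) :
    (H.induce {r}ᶜ).Connected := by
  obtain ⟨w, hw⟩ := card_eq_one.mp hr
  have hchild : ∀ u, u ≠ r → f u = r → u = w := fun u hu hfu =>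
    mem_singleton.mp (hw ▸ mem_children.mpr ⟨hu, hfu⟩)
  have hwr : w ≠ r := (mem_children.mp (hw ▸ mem_singleton_self w)).1
  exact SimpleGraph.connected_induce_of_exists_adj_lt hwr (depth r f) fun v hvr hvw =>
    ⟨f v, fun h => hvw (hchild v hvr h), hf.adj_map v hvr,
      by rw [hf.depth_eq_depth_add_one hvr]; omega⟩

end Children

end IsArborescence

lemma SimpleGraph.Connected.exists_isArborescence {H : SimpleGraph α} (hconn : H.Connected)
    (r : α) : ∃ f, IsArborescence H r f := by
  classical
  have hstep : ∀ v, v ≠ r → ∃ u, H.Adj v u ∧ H.dist u r < H.dist v r := by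
    intro v hv
    obtain ⟨p, hp⟩ := (hconn v r).exists_walk_length_eq_dist
    cases p with
    | nil => exact absurd rfl hv
    | cons hadj q =>
      have := SimpleGraph.dist_le q
      exact ⟨_, hadj, by rw [SimpleGraph.Walk.length_cons] at hp; omega⟩
  choose g hgadj hglt using hstep
  let f v := if hv : v = r then r else g v hv
  refine ⟨f, by simp [f], fun v hv => by simpa [f, hv] using hgadj v hv, fun v => ?_⟩
  induction hd : H.dist v r using Nat.strong_induction_on generalizing v with
  | _ n ih =>
    rcases eq_or_ne v r with rfl | hv
    · exact ⟨0, rfl⟩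
    obtain ⟨k, hk⟩ := ih _ (hd ▸ hglt v hv) (g v hv) rfl
    exact ⟨k + 1, by simpa [f, hv] using hk⟩

section Optimal

variable [Fintype α] [DecidableEq α] {H : SimpleGraph α} {r x y : α} {f : α → α}

structure IsOptimalArborescence (H : SimpleGraph α) (r : α) (f : α → α) : Prop
    extends IsArborescence H r f where
  card_leaves_le : ∀ g, IsArborescence H r g → #(leaves r g) ≤ #(leaves r f)
  totalDepth_le : ∀ g, IsArborescence H r g → #(leaves r g) = #(leaves r f) →
    totalDepth r f ≤ totalDepth r g

lemma SimpleGraph.Connected.exists_isOptimalArborescence (hconn : H.Connected) (r : α) :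
    ∃ f, IsOptimalArborescence H r f := by
  classical
  obtain ⟨f₀, hf₀⟩ := hconn.exists_isArborescence r
  let A : Finset (α → α) := {f | IsArborescence H r f}
  obtain ⟨f₁, hf₁A, hf₁⟩ := A.exists_max_image (fun f => #(leaves r f)) ⟨f₀, by simpa [A]⟩
  obtain ⟨f, hfA, hf⟩ := (A.filter fun g => #(leaves r g) = #(leaves r f₁)).exists_min_image
    (totalDepth r) ⟨f₁, by simp [hf₁A]⟩
  simp only [A, mem_filter, mem_univ, true_and] at hf₁ hfA hf
  exact ⟨f, hfA.1, fun g hg => hfA.2 ▸ hf₁ g hg, fun g hg hgf => hf g ⟨hg, hgf.trans hfA.2⟩⟩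

namespace IsOptimalArborescence

/-- Reparenting `y` to an ancestor `x` other than its parent keeps the leaves and lowers the
total depth. -/
lemma not_iterate_eq_of_adj (hopt : IsOptimalArborescence H r f) (hx : x ≠ r)
    (hxl : x ∉ leaves r f) (hadj : H.Adj x y) (hfy : f y ≠ x) (k : ℕ) : f^[k] y ≠ x := by
  intro hk
  have hf := hopt.toIsArborescence
  have hy : y ≠ r := fun h => hx (by rw [← hk, h, hf.iterate_root])
  have hdepth := hf.depth_add_of_iterate_eq hx hk
  have hk2 : 2 ≤ k := by
    rcases k with _ | _ | k
    · exact absurd hk.symm hadj.ne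
    · exact absurd hk hfy
    · omega
  have hxy : ∀ j, f^[j] x ≠ y := fun j hj => by
    have := hf.depth_add_of_iterate_eq hy hj
    omega
  have hg := hf.update hy hadj.symm hxy
  have hleaves : leaves r f ⊆ leaves r (update f y x) := fun v hv =>
    (mem_leaves_update hy).mpr ⟨fun h => hxl (h ▸ hv), fun u hu _ => mem_leaves.mp hv u hu⟩
  have hcard := le_antisymm (hopt.card_leaves_le _ hg) (card_le_card hleaves)
  have hdec : ∀ v, v ≠ r → depth r f (update f y x v) < depth r f v := by
    intro v hv
    rcases eq_or_ne v y with rfl | hvy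
    · rw [update_self]
      omega
    · rw [update_of_ne hvy, hf.depth_eq_depth_add_one hv]
      omega
  have hle := hf.depth_le_depth_of_forall_lt hg hdec
  have hlt : totalDepth r (update f y x) < totalDepth r f := by
    refine sum_lt_sum (fun v _ => hle v) ⟨y, mem_univ _, ?_⟩
    rw [hg.depth_eq_depth_add_one hy, update_self]
    have := hle x
    omega
  exact (hopt.totalDepth_le _ hg hcard).not_gt hlt

/-- Reparenting the only child `x` of its parent to a non-leaf `y` would add a leaf. -/
lemma mem_leaves_of_adj (hopt : IsOptimalArborescence H r f) (hx : x ≠ r) (hadj : H.Adj x y)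
    (hy : ∀ k, f^[k] y ≠ x) (hyfx : y ≠ f x) (honly : childCount r f (f x) = 1) :
    y ∈ leaves r f := by
  by_contra hyl
  have hg := hopt.update hx hadj hy
  have hsub : insert (f x) (leaves r f) ⊆ leaves r (update f x y) := by
    intro v hv
    rw [mem_leaves_update hx]
    rcases mem_insert.mp hv with rfl | hv
    · exact ⟨hyfx.symm, fun u hu hux hfu =>
        hux ((childCount_apply_eq_one_iff hx).mp honly u hu hfu)⟩
    · exact ⟨fun h => hyl (h ▸ hv), fun u hu _ => mem_leaves.mp hv u hu⟩
  have hfx : f x ∉ leaves r f := fun h => mem_leaves.mp h x hx rfl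
  have := (card_le_card hsub).trans (hopt.card_leaves_le _ hg)
  rw [card_insert_of_notMem hfx] at this
  omega

/-- If not, reparenting `x` to `y` and then `f x` to `x` would turn `f x` and `f (f x)` into
leaves at the cost of the leaf `y` only. -/
lemma two_le_childCount_apply_apply (hopt : IsOptimalArborescence H r f) (hx : x ≠ r)
    (hxl : x ∉ leaves r f) (ha : f x ≠ r) (hadj : H.Adj x y) (hy : ∀ k, f^[k] y ≠ x)
    (hyl : y ∈ leaves r f) (honly : childCount r f (f x) = 1) :
    2 ≤ childCount r f (f (f x)) := by
  have hf := hopt.toIsArborescence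
  have hyfx : y ≠ f x := fun h => mem_leaves.mp hyl x hx h.symm
  have hya := hf.iterate_ne_apply_of_childCount_eq_one hx ha hy hyfx honly
  set a := f x
  by_contra hb
  have honly_a := (childCount_apply_eq_one_iff hx).mp honly
  have honly_b : ∀ u, u ≠ r → f u = f a → u = a :=
    (childCount_apply_eq_one_iff ha).mp (by have := one_le_childCount_apply (f := f) ha; omega)
  have hxa : ∀ k, (update f x y)^[k] x ≠ a := by
    rintro (_ | k) hk
    · exact hf.apply_ne_self hx hk.symm
    · rw [iterate_succ_apply, update_self, iterate_update_of_forall_ne hy] at hk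
      exact hya k hk
  have hg := (hf.update hx hadj hy).update ha (hf.adj_map x hx).symm hxa
  have hmem : ∀ v, v ≠ x → v ≠ y → (∀ u, u ≠ r → u ≠ x → u ≠ a → f u ≠ v) →
      v ∈ leaves r (update (update f x y) a x) := by
    intro v hvx hvy h
    refine (mem_leaves_update ha).mpr ⟨hvx, fun u hu hua => ?_⟩
    rcases eq_or_ne u x with rfl | hux
    · simpa using Ne.symm hvy
    · simpa [hux] using h u hu hux hua
  have hsub : insert a (insert (f a) ((leaves r f).erase y)) ⊆
      leaves r (update (update f x y) a x) := by
    intro v hv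
    simp only [mem_insert, mem_erase] at hv
    rcases hv with rfl | rfl | ⟨hvy, hv⟩
    · exact hmem _ (hf.apply_ne_self hx) hyfx.symm fun u hu hux _ hfu => hux (honly_a u hu hfu)
    · exact hmem _ (hf.apply_apply_ne_self hx) (mem_leaves.mp hyl _ ha)
        fun u hu _ hua hfu => hua (honly_b u hu hfu)
    · exact hmem v (fun h => hxl (h ▸ hv)) hvy fun u hu _ _ => mem_leaves.mp hv u hu
  have hal : a ∉ leaves r f := fun h => mem_leaves.mp h x hx rfl
  have hfal : f a ∉ leaves r f := fun h => mem_leaves.mp h a ha rfl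
  have hcard := (card_le_card hsub).trans (hopt.card_leaves_le _ hg)
  rw [card_insert_of_notMem, card_insert_of_notMem, card_erase_of_mem hyl] at hcard
  · have := card_pos.mpr ⟨y, hyl⟩
    omega
  · exact fun h => hfal (mem_of_mem_erase h)
  · simp only [mem_insert, mem_erase, not_or]
    exact ⟨(hf.apply_ne_self ha).symm, fun h => hal h.2⟩

lemma childCount_apply_cases [DecidableRel H.Adj] (hopt : IsOptimalArborescence H r f)
    (hx : x ≠ r) (hc : childCount r f x = 1) (hdeg : 3 ≤ H.degree x) :
    2 ≤ childCount r f (f x) ∨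
      childCount r f (f x) = 1 ∧ (f x = r ∨ 2 ≤ childCount r f (f (f x))) := by
  have hxl : x ∉ leaves r f := by simp [leaves, hc]
  obtain ⟨y, hadj, hyfx, hfy⟩ := hopt.exists_adj_ne_of_childCount_le_one hx hc.le hdeg
  have hy := hopt.not_iterate_eq_of_adj hx hxl hadj hfy
  by_cases h2 : 2 ≤ childCount r f (f x)
  · exact Or.inl h2
  have h1 : childCount r f (f x) = 1 := by
    have := one_le_childCount_apply (f := f) hx
    omega
  refine Or.inr ⟨h1, or_iff_not_imp_left.mpr fun ha => ?_⟩
  exact hopt.two_le_childCount_apply_apply hx hxl ha hadj hy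
    (hopt.mem_leaves_of_adj hx hadj hy hyfx h1) h1

/-- Every vertex outside `T` branches, has a branching parent or grandparent, or is the only
child of the root; the branching vertices are fewer than the leaves and have fewer than twice as
many children. -/
lemma card_le_six_mul [DecidableRel H.Adj] (hopt : IsOptimalArborescence H r f) {T : Finset α}
    (hleaves : leaves r f ⊆ T) (hroot : childCount r f r = 1 → r ∈ T)
    (hdeg : ∀ x, H.degree x ≤ 2 → x ∈ T) : Fintype.card α ≤ 6 * #T := by
  set c := childCount r f
  set B : Finset α := {v | 2 ≤ c v}
  set P : Finset α := {v | v ≠ r ∧ 2 ≤ c (f v)}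
  set Q : Finset α := {v | v ≠ r ∧ c (f v) = 1 ∧ (f v ≠ r ∧ 2 ≤ c (f (f v)))}
  set R : Finset α := {v | v ≠ r ∧ c (f v) = 1 ∧ f v = r}
  have hcover : ∀ v, v ∈ T ∨ v ∈ P ∨ v ∈ Q ∨ v ∈ R ∨ v ∈ B := by
    intro v
    simp only [B, P, Q, R, mem_filter, mem_univ, true_and]
    by_cases h0 : c v = 0
    · exact Or.inl (hleaves (by simpa [leaves] using h0))
    by_cases h2 : 2 ≤ c v
    · exact Or.inr (Or.inr (Or.inr (Or.inr h2)))
    have hc1 : c v = 1 := by omega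
    by_cases hvr : v = r
    · subst hvr
      exact Or.inl (hroot hc1)
    by_cases hv : H.degree v ≤ 2
    · exact Or.inl (hdeg v hv)
    rcases hopt.childCount_apply_cases hvr hc1 (not_le.mp hv) with h | ⟨h1, h⟩
    · exact Or.inr (Or.inl ⟨hvr, h⟩)
    by_cases hfv : f v = r
    · exact Or.inr (Or.inr (Or.inr (Or.inl ⟨hvr, h1, hfv⟩)))
    · exact Or.inr (Or.inr (Or.inl ⟨hvr, h1, hfv, h.resolve_left hfv⟩))
  have hn : Fintype.card α ≤ #T + #P + #Q + #R + #B := by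
    calc Fintype.card α ≤ #(T ∪ P ∪ Q ∪ R ∪ B) := by
          rw [← card_univ]
          exact card_le_card fun v _ => by simpa only [mem_union, or_assoc] using hcover v
      _ ≤ #T + #P + #Q + #R + #B := by
          grw [card_union_le, card_union_le, card_union_le, card_union_le]
  have hQ : #Q ≤ #P := card_filter_childCount_apply_eq_one_le fun u => u ≠ r ∧ 2 ≤ c (f u)
  have hR : #R ≤ 1 := by
    simpa [filter_eq'] using card_filter_childCount_apply_eq_one_le (r := r) (f := f) (· = r)
  have hP : #P = ∑ v ∈ B, c v := card_filter_apply_eq_sum fun b => 2 ≤ c b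
  have hB : 2 * #B ≤ ∑ v ∈ B, c v := by
    simpa [mul_comm] using card_nsmul_le_sum B c 2 fun v hv => (mem_filter.mp hv).2
  have : Nonempty α := ⟨r⟩
  have hL : ∑ v ∈ B, c v + 1 = #(leaves r f) + #B := sum_childCount_branching_add_one
  have hLT := card_le_card hleaves
  omega

end IsOptimalArborescence

end Optimal

theorem SimpleGraph.Connected.card_le_six_mul_ncard [Fintype α] {H : SimpleGraph α}
    [DecidableRel H.Adj] (hconn : H.Connected) :
    Fintype.card α ≤ 6 * {x | (H.induce {x}ᶜ).Connected ∨ H.degree x ≤ 2}.ncard := by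
  classical
  let T : Finset α := {x | (H.induce {x}ᶜ).Connected ∨ H.degree x ≤ 2}
  rw [show {x | (H.induce {x}ᶜ).Connected ∨ H.degree x ≤ 2}.ncard = #T by
    rw [← Set.ncard_coe_finset, coe_filter]; simp]
  obtain ⟨r⟩ := hconn.nonempty
  obtain ⟨f, hopt⟩ := hconn.exists_isOptimalArborescence r
  rcases le_or_gt (Fintype.card α) 1 with hn | hn
  · have hT : T = univ := eq_univ_of_forall fun x => by
      have := H.degree_lt_card_verts x
      simp only [T, mem_filter, mem_univ, true_and]
      omega
    rw [hT, card_univ]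
    omega
  obtain ⟨v, hv⟩ := Fintype.exists_ne_of_one_lt_card hn r
  refine hopt.card_le_six_mul (fun x hx => ?_) (fun hr => ?_) fun x hx => by simp [T, hx]
  · have hxr : x ≠ r := fun h => hopt.root_notMem_leaves hv (h ▸ hx)
    simp [T, hopt.connected_induce_compl_of_mem_leaves hxr hx]
  · simp [T, hopt.connected_induce_compl_root hr]

end

section DominatingSet

variable {V : Type*} {G : SimpleGraph V} {S : Set V}

lemma sDegree_eq_degree_induce {v : V} (hv : v ∈ S)
    [Fintype ((G.induce S).neighborSet ⟨v, hv⟩)] :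
    sDegree G S v = (G.induce S).degree ⟨v, hv⟩ := by
  have himage : {u ∈ S | G.Adj v u} = Subtype.val '' (G.induce S).neighborSet ⟨v, hv⟩ := by
    ext u
    exact ⟨fun ⟨huS, hadj⟩ => ⟨⟨u, huS⟩, hadj, rfl⟩, by rintro ⟨w, hw, rfl⟩; exact ⟨w.2, hw⟩⟩
  rw [sDegree, himage, Set.ncard_image_of_injective _ Subtype.val_injective,
    ← SimpleGraph.card_neighborSet_eq_degree, ← Nat.card_eq_fintype_card, Nat.card_coe_set_eq]

lemma connected_induce_diff_singleton {x : S} (h : ((G.induce S).induce {x}ᶜ).Connected) :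
    (G.induce (S \ {x.1})).Connected :=
  h.map ⟨fun v => ⟨v.1.1, v.1.2, fun hv => v.2 (Subtype.ext hv)⟩, id⟩
    fun v => ⟨⟨⟨v.1, v.2.1⟩, fun h => v.2.2 (congrArg Subtype.val h)⟩, rfl⟩

lemma IsMinCDS.exists_private_neighbor (hS : IsMinCDS G S) {x : V} (hx : x ∈ S)
    (hconn : (G.induce (S \ {x})).Connected) : ∃ u ∉ S, ∀ w ∈ S, G.Adj u w → w = x := by
  obtain ⟨u, hu, hpriv⟩ : ∃ u ∉ S \ {x}, ∀ w ∈ S \ {x}, ¬ G.Adj u w := by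
    by_contra! h
    exact hS.2 _ (Set.sdiff_singleton_ssubset.mpr hx) ⟨h, hconn⟩
  have hux : u ≠ x := by
    rintro rfl
    obtain ⟨z, hzS, hzx⟩ := hconn.nonempty.some
    have : Nontrivial S :=
      nontrivial_of_ne ⟨u, hx⟩ ⟨z, hzS⟩ fun h => hzx (congrArg Subtype.val h).symm
    obtain ⟨w, hw⟩ := hS.1.2.preconnected.exists_adj_of_nontrivial ⟨u, hx⟩
    exact hpriv w ⟨w.2, fun h => hw.ne (Subtype.ext h.symm)⟩ hw
  exact ⟨u, fun huS => hu ⟨huS, hux⟩, fun w hw hadj => by_contra fun hwx => hpriv w ⟨hw, hwx⟩ hadj⟩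

lemma IsMinCDS.ncard_setOf_connected_le [Finite V] (hS : IsMinCDS G S) :
    {x : S | ((G.induce S).induce {x}ᶜ).Connected}.ncard ≤
      ({v | sDegree G S v ≤ 2} \ S).ncard := by
  have : Nonempty V := ⟨hS.1.2.nonempty.some.1⟩
  have hpriv : ∀ x : S, ((G.induce S).induce {x}ᶜ).Connected →
      ∃ u ∉ S, ∀ w ∈ S, G.Adj u w → w = x := fun x hx =>
    hS.exists_private_neighbor x.2 (connected_induce_diff_singleton hx)
  choose! p hpS hp using hpriv
  refine Set.ncard_le_ncard_of_injOn p (fun x hx => ⟨?_, hpS x hx⟩) fun x hx y hy hxy => ?_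
  · calc sDegree G S (p x) ≤ ({x.1} : Set V).ncard :=
          Set.ncard_le_ncard (fun w hw => hp x hx w hw.1 hw.2) (Set.finite_singleton _)
      _ ≤ 2 := by simp
  · obtain ⟨w, hwS, hw⟩ := hS.1.1 (p x) (hpS x hx)
    exact Subtype.ext ((hp x hx w hwS hw).symm.trans (hp y hy w hwS (hxy ▸ hw)))

lemma IsMinCDS.ncard_le_six_mul_ncard [Finite V] (hS : IsMinCDS G S) :
    S.ncard ≤ 6 * {v | sDegree G S v ≤ 2}.ncard := by
  classical
  have := Fintype.ofFinite V
  have hR := hS.ncard_setOf_connected_le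
  set L := {v | sDegree G S v ≤ 2}
  have hcover : {x : S | ((G.induce S).induce {x}ᶜ).Connected ∨ (G.induce S).degree x ≤ 2} ⊆
      {x : S | ((G.induce S).induce {x}ᶜ).Connected} ∪ Subtype.val ⁻¹' (L ∩ S) := by
    rintro x (hx | hx)
    · exact Or.inl hx
    · exact Or.inr ⟨by simpa [L, sDegree_eq_degree_induce x.2] using hx, x.2⟩
  have hlow : (Subtype.val ⁻¹' (L ∩ S) : Set S).ncard = (L ∩ S).ncard :=
    Set.ncard_preimage_of_injective_subset_range Subtype.val_injective (by simp)
  have hsplit := Set.ncard_inter_add_ncard_sdiff_eq_ncard L S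
  calc S.ncard = Fintype.card S := by rw [← Nat.card_coe_set_eq, Nat.card_eq_fintype_card]
    _ ≤ 6 * _ := hS.1.2.card_le_six_mul_ncard
    _ ≤ 6 * L.ncard := by
      grw [Set.ncard_le_ncard hcover, Set.ncard_union_le, hR, hlow]
      omega

end DominatingSet

/-- For a minimal connected dominating set S with |S| ≥ (4/10)n, at least n/20 vertices
have S-degree at most 2. -/
theorem low_sdegree_lower_bound {V : Type*} [Fintype V] (G : SimpleGraph V) (S : Set V)
    (hS : IsMinCDS G S) (hsize : (4 / 10 : ℝ) * (Fintype.card V : ℝ) ≤ (S.ncard : ℝ)) :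
    (Fintype.card V : ℝ) / 20 ≤ ({v : V | sDegree G S v ≤ 2}.ncard : ℝ) := by
  have h : (S.ncard : ℝ) ≤ 6 * {v : V | sDegree G S v ≤ 2}.ncard := by
    exact_mod_cast hS.ncard_le_six_mul_ncard
  have hn : (0 : ℝ) ≤ Fintype.card V := Nat.cast_nonneg _
  linarith
end

section
/- Let G be a connected graph with at least 2 vertices, S a minimal connected dominating set of G, and S_cut the set of vertices v ∈ S such that G[S] - v is disconnected. Then the number of vertices u ∉ S with exactly one neighbor in S is at least |S \ S_cut|; more precisely, for every v ∈ S \ S_cut there exists a vertex u ∉ S whose unique neighbor in S is v. -/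
private lemma walk_head_adj {V : Type*} {G : SimpleGraph V} {v w : V} (p : G.Walk v w)
    (h : v ≠ w) : ∃ x, G.Adj v x := by
  cases p with
  | nil => exact absurd rfl h
  | cons h' _ => exact ⟨_, h'⟩

/-- For a minimal connected dominating set S of a connected graph G on at least 2 vertices,
every vertex v ∈ S that is not a cutvertex of G[S] has a private dominated vertex u ∉ S
whose unique neighbor in S is v; consequently the number of vertices outside S with exactly
one neighbor in S is at least |S \ S_cut|. -/
theorem noncut_vertices_have_private_neighbors {V : Type*} [Fintype V] (G : SimpleGraph V)
    (hG : G.Connected) (h2 : 2 ≤ Fintype.card V) (S : Set V) (hS : IsMinCDS G S)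
    (Scut : Set V)
    (hScut : Scut = {v ∈ S | ¬ (G.induce (S \ {v})).Connected}) :
    (∀ v ∈ S \ Scut, ∃ u ∉ S, G.Adj u v ∧ ∀ w ∈ S, G.Adj u w → w = v) ∧
    (S \ Scut).ncard ≤ {u : V | u ∉ S ∧ {w ∈ S | G.Adj u w}.ncard = 1}.ncard := by
  subst hScut
  have key : ∀ v ∈ S \ {v ∈ S | ¬ (G.induce (S \ {v})).Connected},
      ∃ u ∉ S, G.Adj u v ∧ ∀ w ∈ S, G.Adj u w → w = v := by
    rintro v ⟨hvS, hv⟩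
    simp only [Set.mem_setOf_eq, not_and, not_not] at hv
    have hconn : (G.induce (S \ {v})).Connected := hv hvS
    have hss : S \ {v} ⊂ S := Set.sdiff_singleton_ssubset.mpr hvS
    have hnc := hS.2 _ hss
    rw [IsCDS, not_and_or] at hnc
    rcases hnc with hdom | hc
    · push_neg at hdom
      obtain ⟨u, huS, hu⟩ := hdom
      -- hu : ∀ w ∈ S \ {v}, ¬ G.Adj u w
      have huv : u ≠ v := by
        rintro rfl
        obtain ⟨⟨w, hw⟩⟩ := hconn.nonempty
        have hwv : w ≠ u := hw.2
        have hreach := hS.1.2.preconnected ⟨u, hvS⟩ ⟨w, hw.1⟩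
        obtain ⟨p⟩ := hreach
        have hne : (⟨u, hvS⟩ : S) ≠ ⟨w, hw.1⟩ := by
          simp only [Ne, Subtype.ext_iff]
          exact fun h => hwv h.symm
        obtain ⟨x, hx⟩ := walk_head_adj p hne
        have hadj : G.Adj u x.1 := hx
        exact hu x.1 ⟨x.2, fun h => hadj.ne (by simpa using h.symm)⟩ hadj
      have huS' : u ∉ S := fun h => huS ⟨h, huv⟩
      obtain ⟨w, hwS, hadj⟩ := hS.1.1 u huS'
      have hwv : w = v := by
        by_contra h
        exact hu w ⟨hwS, h⟩ hadj
      subst hwv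
      refine ⟨u, huS', hadj, fun w hwS hadj' => ?_⟩
      by_contra h
      exact hu w ⟨hwS, h⟩ hadj'
    · exact absurd hconn hc
  refine ⟨key, ?_⟩
  set D := S \ {v ∈ S | ¬ (G.induce (S \ {v})).Connected} with hD
  choose f hf1 hf2 hf3 using key
  have : ∀ v (hv : v ∈ D), {w ∈ S | G.Adj (f v hv) w} = {v} := by
    intro v hv
    ext w
    simp only [Set.mem_setOf_eq, Set.mem_singleton_iff]
    constructor
    · rintro ⟨h1, h2⟩; exact hf3 v hv w h1 h2
    · rintro rfl; exact ⟨hv.1, hf2 _ hv⟩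
  classical
  set g : V → V := fun v => if hv : v ∈ D then f v hv else v with hg
  apply Set.ncard_le_ncard_of_injOn g
  · intro v hv
    simp only [hg, dif_pos hv, Set.mem_setOf_eq]
    exact ⟨hf1 v hv, by rw [this v hv]; exact Set.ncard_singleton _⟩
  · intro v1 h1 v2 h2 heq
    simp only [hg, dif_pos h1, dif_pos h2] at heq
    have := hf3 v1 h1 v2 h2.1 (heq ▸ hf2 v2 h2)
    exact this.symm
end

section
/- Let G be a graph with nonempty disjoint vertex sets I and O such that both G[I ∪ O] and G - (I ∪ O) are edgeless, and I is nonempty. Then every minimal (I,O)-extension S satisfies |S| ≤ |I ∪ O|. -/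
/-- S is an (I,O)-extension: S is disjoint from I ∪ O and I ∪ S is a connected
dominating set of G. -/
def IsExtension {V : Type*} (G : SimpleGraph V) (I O S : Set V) : Prop :=
  Disjoint S (I ∪ O) ∧ IsCDS G (I ∪ S)

/-- S is a minimal (I,O)-extension: no proper subset of S is an (I,O)-extension. -/
def IsMinExtension {V : Type*} (G : SimpleGraph V) (I O S : Set V) : Prop :=
  IsExtension G I O S ∧ ∀ S' ⊂ S, ¬ IsExtension G I O S'

/-!
Every neighbour of a vertex of `S` lies in `I ∪ O`, so inside `T = I ∪ S` the vertices of `S`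
see only `I`. By minimality, deleting `s ∈ S` from `T` either leaves some vertex undominated,
which must then be a neighbour of `s` in `O` seeing no other vertex of `S`, or disconnects `T`,
and then some neighbour `a ∈ I` of `s` is cut off from a fixed root `r ∈ I`. Charging `s` to that
vertex of `I ∪ O` is injective: if `s₁ ≠ s₂` both cut `a` off from `r`, then neither is reachable
from `r` avoiding the other, so each must occur before the other on a walk from `r` to `s₁`.
-/

namespace SimpleGraph

variable {V : Type*} {G : SimpleGraph V} {B T : Set V} {r s x y z : V}

def ReachableIn (G : SimpleGraph V) (B : Set V) (x y : V) : Prop :=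
  ∃ w : G.Walk x y, ∀ z ∈ w.support, z ∈ B

namespace ReachableIn

theorem refl (hx : x ∈ B) : G.ReachableIn B x x :=
  ⟨.nil, by simpa using hx⟩

theorem symm (h : G.ReachableIn B x y) : G.ReachableIn B y x := by
  obtain ⟨w, hw⟩ := h
  exact ⟨w.reverse, by simpa using hw⟩

theorem trans (hxy : G.ReachableIn B x y) (hyz : G.ReachableIn B y z) :
    G.ReachableIn B x z := by
  obtain ⟨w₁, hw₁⟩ := hxy
  obtain ⟨w₂, hw₂⟩ := hyz
  refine ⟨w₁.append w₂, fun u hu => ?_⟩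
  rcases (Walk.mem_support_append_iff _ _).1 hu with hu | hu
  exacts [hw₁ u hu, hw₂ u hu]

theorem mem_right (h : G.ReachableIn B x y) : y ∈ B := by
  obtain ⟨w, hw⟩ := h
  exact hw y w.end_mem_support

theorem concat (h : G.ReachableIn B x y) (hyz : G.Adj y z) (hz : z ∈ B) :
    G.ReachableIn B x z :=
  h.trans ⟨hyz.toWalk, by simp [h.mem_right, hz]⟩

end ReachableIn

theorem Walk.reachableIn_diff_singleton (w : G.Walk x y) (hw : ∀ u ∈ w.support, u ∈ B)
    (hz : z ∉ w.support) : G.ReachableIn (B \ {z}) x y :=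
  ⟨w, fun u hu => ⟨hw u hu, fun (huz : u = z) => hz (huz ▸ hu)⟩⟩

theorem reachableIn_iff_reachable_induce (hx : x ∈ B) (hy : y ∈ B) :
    G.ReachableIn B x y ↔ (G.induce B).Reachable ⟨x, hx⟩ ⟨y, hy⟩ :=
  ⟨fun ⟨w, hw⟩ => ⟨w.induce B hw⟩,
    fun ⟨w⟩ => ⟨(w.map (Embedding.induce B).toHom : G.Walk x y), fun z hz => by
      obtain ⟨z', -, rfl⟩ := List.mem_map.1 ((Walk.support_map _ _) ▸ hz)
      exact z'.2⟩⟩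

theorem Connected.reachableIn (h : (G.induce B).Connected) (hx : x ∈ B) (hy : y ∈ B) :
    G.ReachableIn B x y :=
  (reachableIn_iff_reachable_induce hx hy).2 (h _ _)

theorem connected_induce_of_forall_reachableIn (hr : r ∈ B)
    (h : ∀ y ∈ B, G.ReachableIn B r y) : (G.induce B).Connected :=
  (connected_iff_exists_forall_reachable _).2
    ⟨⟨r, hr⟩, fun y => (reachableIn_iff_reachable_induce hr y.2).1 (h y y.2)⟩

theorem Connected.exists_adj_induce (hT : (G.induce T).Connected) (hs : s ∈ T) (hr : r ∈ T)
    (hsr : s ≠ r) : ∃ a ∈ T, G.Adj s a := by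
  obtain ⟨w, hw⟩ := hT.reachableIn hs hr
  exact ⟨w.snd, hw _ (w.getVert_mem_support 1), Walk.adj_snd (Walk.not_nil_of_ne hsr)⟩

theorem Connected.exists_adj_not_reachableIn_diff (hT : (G.induce T).Connected) (hr : r ∈ T)
    (hrs : r ≠ s) (hcut : ¬(G.induce (T \ {s})).Connected) :
    ∃ a ∈ T, G.Adj a s ∧ ¬G.ReachableIn (T \ {s}) r a := by
  have hr' : r ∈ T \ {s} := ⟨hr, hrs⟩
  obtain ⟨z, hz, hrz⟩ : ∃ z ∈ T \ {s}, ¬G.ReachableIn (T \ {s}) r z := by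
    by_contra! h
    exact hcut (connected_induce_of_forall_reachableIn hr' h)
  obtain ⟨w, hw⟩ := hT.reachableIn hz.1 hr
  -- The walk from `z` to `r` leaves the part of `T \ {s}` reachable from `z`, necessarily at `s`.
  obtain ⟨d, hd, hzd, hzd'⟩ := w.exists_boundary_dart {u | G.ReachableIn (T \ {s}) z u}
    (ReachableIn.refl hz) (fun h => hrz h.symm)
  have hds : d.snd = s := by
    by_contra hne
    exact hzd' (hzd.concat d.adj ⟨hw _ (w.dart_snd_mem_support_of_mem_darts hd), hne⟩)
  exact ⟨d.fst, hzd.mem_right.1, hds ▸ d.adj, fun h => hrz (h.trans hzd.symm)⟩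

theorem ReachableIn.eq_of_not_reachableIn_diff (h : G.ReachableIn B r x)
    (hx : ¬G.ReachableIn (B \ {y}) r x) (hy : ¬G.ReachableIn (B \ {x}) r y) : x = y := by
  classical
  obtain ⟨w, hw⟩ := h
  induction hn : w.length using Nat.strong_induction_on generalizing x y with
  | _ n ih =>
    by_contra hxy
    have hyw : y ∈ w.support := by
      by_contra hyw
      exact hx (w.reachableIn_diff_singleton hw hyw)
    have hlt : (w.takeUntil y hyw).length < n :=
      hn ▸ w.length_takeUntil_lt_length hyw (Ne.symm hxy)
    exact hxy (ih _ hlt hy hx (w.takeUntil y hyw)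
      (fun u hu => hw u (w.support_takeUntil_subset_support hyw hu)) rfl).symm

theorem Connected.eq_of_adj_of_not_reachableIn_diff {s₁ s₂ a : V}
    (hT : (G.induce T).Connected) (hr : r ∈ T) (hs₁ : s₁ ∈ T) (ha : a ∈ T)
    (h₁ : G.Adj a s₁) (h₂ : G.Adj a s₂)
    (hn₁ : ¬G.ReachableIn (T \ {s₁}) r a) (hn₂ : ¬G.ReachableIn (T \ {s₂}) r a) : s₁ = s₂ :=
  (hT.reachableIn hr hs₁).eq_of_not_reachableIn_diff
    (fun h => hn₂ (h.concat h₁.symm ⟨ha, h₂.ne⟩))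
    (fun h => hn₁ (h.concat h₂.symm ⟨ha, h₁.ne⟩))

end SimpleGraph

open SimpleGraph

section Extension

variable {V : Type*} {G : SimpleGraph V} {I O S : Set V} {r s t : V}

def IsChargedTo (G : SimpleGraph V) (I O S : Set V) (r s t : V) : Prop :=
  (t ∈ O ∧ G.Adj t s ∧ ∀ s' ∈ S, G.Adj t s' → s' = s) ∨
    (t ∈ I ∧ G.Adj t s ∧ ¬G.ReachableIn ((I ∪ S) \ {s}) r t)

theorem IsChargedTo.mem_union (h : IsChargedTo G I O S r s t) : t ∈ I ∪ O := by
  rcases h with ⟨ht, -⟩ | ⟨ht, -⟩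
  exacts [Or.inr ht, Or.inl ht]

theorem IsChargedTo.left_unique {s₁ s₂ : V} (hIO : Disjoint I O)
    (hconn : (G.induce (I ∪ S)).Connected) (hr : r ∈ I) (hs₁ : s₁ ∈ S) (hs₂ : s₂ ∈ S)
    (h₁ : IsChargedTo G I O S r s₁ t) (h₂ : IsChargedTo G I O S r s₂ t) : s₁ = s₂ := by
  rcases h₁ with ⟨ht₁, -, hpriv⟩ | ⟨ht₁, ha₁, hn₁⟩ <;>
    rcases h₂ with ⟨ht₂, ha₂, -⟩ | ⟨ht₂, ha₂, hn₂⟩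
  · exact (hpriv s₂ hs₂ ha₂).symm
  · exact (hIO.notMem_of_mem_left ht₂ ht₁).elim
  · exact (hIO.notMem_of_mem_left ht₁ ht₂).elim
  · exact hconn.eq_of_adj_of_not_reachableIn_diff (Or.inl hr) (Or.inr hs₁) (Or.inl ht₁)
      ha₁ ha₂ hn₁ hn₂

theorem IsMinExtension.exists_isChargedTo (hS : IsMinExtension G I O S)
    (hedgeless : ∀ u ∉ I ∪ O, ∀ v ∉ I ∪ O, ¬ G.Adj u v) (hr : r ∈ I) (hs : s ∈ S) :
    ∃ t, IsChargedTo G I O S r s t := by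
  obtain ⟨⟨hdisj, hdom, hconn⟩, hmin⟩ := hS
  have hsA : s ∉ I ∪ O := hdisj.notMem_of_mem_left hs
  have hsI : s ∉ I := fun h => hsA (Or.inl h)
  have hnbr : ∀ v, G.Adj v s → v ∈ I ∪ O := fun v hv => by
    by_contra h
    exact hedgeless v h s hsA hv
  have hdel : I ∪ S \ {s} = (I ∪ S) \ {s} := by
    rw [Set.union_sdiff_distrib, Set.sdiff_singleton_eq_self hsI]
  have hnot : ¬IsCDS G ((I ∪ S) \ {s}) := fun h =>
    hmin _ (Set.sdiff_singleton_ssubset.2 hs) ⟨hdisj.mono_left Set.sdiff_subset, hdel ▸ h⟩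
  by_cases hdom' : ∀ v ∉ (I ∪ S) \ {s}, ∃ u ∈ (I ∪ S) \ {s}, G.Adj v u
  · obtain ⟨a, haT, has, hra⟩ := hconn.exists_adj_not_reachableIn_diff (Or.inl hr)
      (ne_of_mem_of_not_mem hr hsI) (fun h => hnot ⟨hdom', h⟩)
    have haI : a ∈ I := haT.resolve_right fun haS => hdisj.notMem_of_mem_left haS (hnbr a has)
    exact ⟨a, .inr ⟨haI, has, hra⟩⟩
  push Not at hdom'
  obtain ⟨v, hv, hvu⟩ := hdom'
  obtain ⟨a, haT, hsa⟩ := hconn.exists_adj_induce (Or.inr hs) (Or.inl hr)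
    (ne_of_mem_of_not_mem hr hsI).symm
  -- `s` is still dominated by its neighbour `a`, so `v` lies outside `I ∪ S`.
  have hvs : v ≠ s := by
    rintro rfl
    exact hvu a ⟨haT, hsa.ne.symm⟩ hsa
  have hvT : v ∉ I ∪ S := fun h => hv ⟨h, hvs⟩
  obtain ⟨u, huT, hvu'⟩ := hdom v hvT
  have hus : u = s := by
    by_contra hne
    exact hvu u ⟨huT, hne⟩ hvu'
  subst hus
  have hvO : v ∈ O := (hnbr v hvu').resolve_left fun h => hvT (Or.inl h)
  refine ⟨v, .inl ⟨hvO, hvu', fun s' hs' hvs' => ?_⟩⟩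
  by_contra hne
  exact hvu s' ⟨Or.inr hs', hne⟩ hvs'

end Extension

theorem minimal_extension_card_le_general {V : Type*} [Fintype V] (G : SimpleGraph V)
    (I O : Set V) (hIO : Disjoint I O) (hI : I.Nonempty)
    (hedgeless₂ : ∀ u ∉ I ∪ O, ∀ v ∉ I ∪ O, ¬ G.Adj u v)
    (S : Set V) (hS : IsMinExtension G I O S) :
    S.ncard ≤ (I ∪ O).ncard := by
  obtain ⟨r, hr⟩ := hI
  choose! f hf using fun s (hs : s ∈ S) => hS.exists_isChargedTo hedgeless₂ hr hs
  refine Set.ncard_le_ncard_of_injOn f (fun s hs => (hf s hs).mem_union) ?_ (Set.toFinite _)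
  intro s₁ hs₁ s₂ hs₂ heq
  exact (hf s₁ hs₁).left_unique hIO hS.1.2.2 hr hs₁ hs₂ (heq ▸ hf s₂ hs₂)

/-- If I is nonempty, I and O are disjoint, G[I ∪ O] is edgeless and G - (I ∪ O) is
edgeless, then every minimal (I,O)-extension S satisfies |S| ≤ |I ∪ O|. -/
theorem minimal_extension_card_le {V : Type*} [Fintype V] (G : SimpleGraph V)
    (I O : Set V) (hIO : Disjoint I O) (hI : I.Nonempty)
    (hedgeless₁ : ∀ u ∈ I ∪ O, ∀ v ∈ I ∪ O, ¬ G.Adj u v)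
    (hedgeless₂ : ∀ u ∉ I ∪ O, ∀ v ∉ I ∪ O, ¬ G.Adj u v)
    (S : Set V) (hS : IsMinExtension G I O S) :
    S.ncard ≤ (I ∪ O).ncard :=
  minimal_extension_card_le_general G I O hIO hI hedgeless₂ S hS
end

section
/- Let G be a graph on n vertices and let ℓ, h be integers with 1 ≤ ℓ ≤ h, and δ a real with 0 ≤ δ ≤ 1. Then either (1) G has a spanning subgraph G' in which every vertex has degree at most h and fewer than δn vertices have degree less than ℓ, or (2) V(G) admits a partition into L, H, R with |L| ≥ δn, every vertex of L having strictly fewer than ℓ neighbors (in G) outside H, and |H| ≤ (2ℓ/h)·n. -/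
/-!
Among the subgraphs of `G` of maximum degree at most `h`, take `G₀` maximising
`∑ v, min (deg v) ℓ`, and inclusion-minimal among the maximisers. Maximality means that no edge
of `G` joining a vertex of degree `< ℓ` to a vertex of degree `< h` is missing from `G₀`, so a
vertex of `L = {deg < ℓ}` has fewer than `ℓ` neighbours in `G` outside `H = {deg = h}`.
Minimality means that every edge of `G₀` has an endpoint of degree `≤ ℓ`; the degree sum of `G₀`
is then at most twice that of the vertices of degree `≤ ℓ`, so `h |H| ≤ 2ℓn`.
Either `|L| < δn` and `G₀` is the spanning subgraph, or `L`, `H` and the rest form the partition.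
-/

open Finset

namespace SimpleGraph

variable {V : Type*} {G G₀ : SimpleGraph V} {u v x : V} {ℓ h : ℕ}

lemma neighborSet_edge_left (huv : u ≠ v) : (edge u v).neighborSet u = {v} := by
  ext w
  simp only [mem_neighborSet, edge_adj, Set.mem_singleton_iff]
  grind

lemma neighborSet_edge_of_ne (hxu : x ≠ u) (hxv : x ≠ v) : (edge u v).neighborSet x = ∅ := by
  ext w
  simp only [mem_neighborSet, edge_adj, Set.mem_empty_iff_false, iff_false]
  grind

lemma neighborSet_sup_edge_of_ne (hxu : x ≠ u) (hxv : x ≠ v) :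
    (G ⊔ edge u v).neighborSet x = G.neighborSet x := by
  rw [neighborSet_sup, neighborSet_edge_of_ne hxu hxv, Set.union_empty]

lemma neighborSet_sdiff_edge_of_ne (hxu : x ≠ u) (hxv : x ≠ v) :
    (G \ edge u v).neighborSet x = G.neighborSet x := by
  rw [neighborSet_sdiff, neighborSet_edge_of_ne hxu hxv, Set.sdiff_empty]

section Finite

variable [Finite V]

lemma ncard_neighborSet_mono {G' : SimpleGraph V} (hle : G ≤ G') (v : V) :
    (G.neighborSet v).ncard ≤ (G'.neighborSet v).ncard :=
  Set.ncard_le_ncard (neighborSet_mono hle v)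

lemma ncard_neighborSet_sup_edge_left (huv : u ≠ v) (hadj : ¬G.Adj u v) :
    ((G ⊔ edge u v).neighborSet u).ncard = (G.neighborSet u).ncard + 1 := by
  rw [neighborSet_sup, neighborSet_edge_left huv, Set.union_singleton,
    Set.ncard_insert_of_notMem (show v ∉ G.neighborSet u from hadj)]

lemma ncard_neighborSet_sdiff_edge_left (hadj : G.Adj u v) :
    ((G \ edge u v).neighborSet u).ncard + 1 = (G.neighborSet u).ncard := by
  rw [neighborSet_sdiff, neighborSet_edge_left hadj.ne]
  exact Set.ncard_sdiff_singleton_add_one hadj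

end Finite

section Fintype

variable [Fintype V]

noncomputable def cappedDegreeSum (ℓ : ℕ) (G : SimpleGraph V) : ℕ :=
  ∑ v, min (G.neighborSet v).ncard ℓ

lemma cappedDegreeSum_mono {G' : SimpleGraph V} (hle : G ≤ G') :
    cappedDegreeSum ℓ G ≤ cappedDegreeSum ℓ G' :=
  sum_le_sum fun v _ ↦ min_le_min_right ℓ (ncard_neighborSet_mono hle v)

lemma adj_of_forall_cappedDegreeSum_le (hℓh : ℓ ≤ h) (hG₀ : G₀ ≤ G)
    (hmax : ∀ G' ≤ G, (∀ x, (G'.neighborSet x).ncard ≤ h) →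
      cappedDegreeSum ℓ G' ≤ cappedDegreeSum ℓ G₀)
    (hdeg : ∀ x, (G₀.neighborSet x).ncard ≤ h) (hvu : G.Adj v u)
    (hu : (G₀.neighborSet u).ncard < h) (hv : (G₀.neighborSet v).ncard < ℓ) : G₀.Adj v u := by
  by_contra hna
  have hdeg_v := ncard_neighborSet_sup_edge_left hvu.ne hna
  have hdeg_u : ((G₀ ⊔ edge v u).neighborSet u).ncard = (G₀.neighborSet u).ncard + 1 := by
    rw [edge_comm]
    exact ncard_neighborSet_sup_edge_left hvu.ne.symm fun hadj ↦ hna hadj.symm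
  have hdeg₁ : ∀ x, ((G₀ ⊔ edge v u).neighborSet x).ncard ≤ h := by
    intro x
    rcases eq_or_ne x v with rfl | hxv
    · omega
    rcases eq_or_ne x u with rfl | hxu
    · omega
    rw [neighborSet_sup_edge_of_ne hxv hxu]
    exact hdeg x
  have hlt : cappedDegreeSum ℓ G₀ < cappedDegreeSum ℓ (G₀ ⊔ edge v u) :=
    sum_lt_sum (fun x _ ↦ min_le_min_right ℓ (ncard_neighborSet_mono le_sup_left x))
      ⟨v, mem_univ v, by omega⟩
  exact (hmax _ (sup_le hG₀ ((edge_le_iff _).2 (.inr hvu))) hdeg₁).not_gt hlt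

lemma ncard_neighborSet_le_or_of_forall_lt_cappedDegreeSum
    (hmin : ∀ G' < G₀, cappedDegreeSum ℓ G' < cappedDegreeSum ℓ G₀) (huv : G₀.Adj u v) :
    (G₀.neighborSet u).ncard ≤ ℓ ∨ (G₀.neighborSet v).ncard ≤ ℓ := by
  by_contra! hlarge
  obtain ⟨hu, hv⟩ := hlarge
  have hdeg_u := ncard_neighborSet_sdiff_edge_left huv
  have hdeg_v : ((G₀ \ edge u v).neighborSet v).ncard + 1 = (G₀.neighborSet v).ncard := by
    rw [edge_comm]
    exact ncard_neighborSet_sdiff_edge_left huv.symm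
  have hlt : G₀ \ edge u v < G₀ := lt_of_le_of_ne sdiff_le fun heq ↦ by
    rw [heq] at hdeg_u
    omega
  refine (hmin _ hlt).ne (sum_congr rfl fun x _ ↦ ?_)
  rcases eq_or_ne x u with rfl | hxu
  · omega
  rcases eq_or_ne x v with rfl | hxv
  · omega
  rw [neighborSet_sdiff_edge_of_ne hxu hxv]

theorem exists_le_forall_cappedDegreeSum (G : SimpleGraph V) (ℓ h : ℕ) :
    ∃ G₀ ≤ G, (∀ x, (G₀.neighborSet x).ncard ≤ h) ∧
      (∀ G' ≤ G, (∀ x, (G'.neighborSet x).ncard ≤ h) →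
        cappedDegreeSum ℓ G' ≤ cappedDegreeSum ℓ G₀) ∧
      ∀ G' < G₀, cappedDegreeSum ℓ G' < cappedDegreeSum ℓ G₀ := by
  classical
  obtain ⟨G₁, ⟨hG₁, hdeg₁⟩, hmax⟩ := Set.exists_max_image
    {G' : SimpleGraph V | G' ≤ G ∧ ∀ x, (G'.neighborSet x).ncard ≤ h} (cappedDegreeSum ℓ)
    (Set.toFinite _) ⟨⊥, bot_le, fun x ↦ by simp⟩
  obtain ⟨G₀, ⟨⟨hG₀, hdeg₀⟩, hΦ⟩, hmin⟩ := exists_minimal_of_wellFoundedLT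
    (fun G' ↦ (G' ≤ G ∧ ∀ x, (G'.neighborSet x).ncard ≤ h) ∧
      cappedDegreeSum ℓ G' = cappedDegreeSum ℓ G₁) ⟨G₁, ⟨hG₁, hdeg₁⟩, rfl⟩
  refine ⟨G₀, hG₀, hdeg₀, fun G' hG' hdeg' ↦ hΦ ▸ hmax G' ⟨hG', hdeg'⟩, fun G' hlt ↦ ?_⟩
  refine (cappedDegreeSum_mono hlt.le).lt_of_ne fun heq ↦ hlt.not_ge (hmin ?_ hlt.le)
  exact ⟨⟨hlt.le.trans hG₀, fun x ↦ (ncard_neighborSet_mono hlt.le x).trans (hdeg₀ x)⟩,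
    heq.trans hΦ⟩

theorem sum_ncard_neighborSet_le
    (hG : ∀ u v, G.Adj u v → (G.neighborSet u).ncard ≤ ℓ ∨ (G.neighborSet v).ncard ≤ ℓ) :
    ∑ v, (G.neighborSet v).ncard ≤ 2 * ℓ * Fintype.card V := by
  classical
  set low := univ.filter fun v ↦ (G.neighborSet v).ncard ≤ ℓ
  set high := univ.filter fun v ↦ ¬(G.neighborSet v).ncard ≤ ℓ
  have hhigh : ∀ a ∈ high, (G.neighborSet a).ncard = #(low.bipartiteAbove G.Adj a) := by
    intro a ha
    rw [← Set.ncard_coe_finset]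
    congr 1
    ext b
    simp only [mem_neighborSet, coe_bipartiteAbove, Set.mem_ofPred_eq, low, mem_filter,
      mem_univ, true_and]
    simp only [high, mem_filter, mem_univ, true_and] at ha
    exact ⟨fun hab ↦ ⟨(hG a b hab).resolve_left ha, hab⟩, And.right⟩
  have hlow : ∀ b ∈ low, #(high.bipartiteBelow G.Adj b) ≤ (G.neighborSet b).ncard := by
    intro b _
    rw [← Set.ncard_coe_finset]
    exact Set.ncard_le_ncard fun a ha ↦ ((mem_bipartiteBelow _).1 (mem_coe.1 ha)).2.symm
  calc ∑ v, (G.neighborSet v).ncard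
      = ∑ v ∈ high, (G.neighborSet v).ncard + ∑ v ∈ low, (G.neighborSet v).ncard :=
        (sum_filter_not_add_sum_filter _ _ _).symm
    _ ≤ 2 * ∑ v ∈ low, (G.neighborSet v).ncard := by
        rw [sum_congr rfl hhigh, sum_card_bipartiteAbove_eq_sum_card_bipartiteBelow]
        linarith [sum_le_sum hlow]
    _ ≤ 2 * (#low * ℓ) := by
        gcongr
        exact sum_le_card_nsmul _ _ _ fun v hv ↦ (mem_filter.1 hv).2
    _ ≤ 2 * ℓ * Fintype.card V := by
        rw [mul_comm #low, ← mul_assoc]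
        gcongr
        exact card_filter_le _ _

theorem mul_ncard_setOf_ncard_neighborSet_eq_le
    (hG : ∀ u v, G.Adj u v → (G.neighborSet u).ncard ≤ ℓ ∨ (G.neighborSet v).ncard ≤ ℓ) (h : ℕ) :
    h * {v | (G.neighborSet v).ncard = h}.ncard ≤ 2 * ℓ * Fintype.card V := by
  classical
  calc h * {v | (G.neighborSet v).ncard = h}.ncard
      = ∑ v ∈ univ.filter fun v ↦ (G.neighborSet v).ncard = h, (G.neighborSet v).ncard := by
        rw [sum_congr rfl fun v hv ↦ (mem_filter.1 hv).2, sum_const, smul_eq_mul, mul_comm,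
          Set.ncard_eq_toFinset_card', Set.toFinset_ofPred]
    _ ≤ ∑ v, (G.neighborSet v).ncard := sum_le_sum_of_subset (filter_subset _ _)
    _ ≤ 2 * ℓ * Fintype.card V := sum_ncard_neighborSet_le hG

end Fintype

end SimpleGraph

theorem spanning_subgraph_or_partition_general {V : Type*} [Fintype V] (G : SimpleGraph V)
    (ℓ h : ℕ) (hℓ : 1 ≤ ℓ) (hh : ℓ ≤ h) (δ : ℝ) :
    (∃ G' : SimpleGraph V, G' ≤ G ∧
      (∀ v, (G'.neighborSet v).ncard ≤ h) ∧
      ({v : V | (G'.neighborSet v).ncard < ℓ}.ncard : ℝ) < δ * (Fintype.card V : ℝ)) ∨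
    (∃ L H R : Set V, L ∪ H ∪ R = Set.univ ∧
      Disjoint L H ∧ Disjoint L R ∧ Disjoint H R ∧
      δ * (Fintype.card V : ℝ) ≤ (L.ncard : ℝ) ∧
      (∀ v ∈ L, ((G.neighborSet v) \ H).ncard < ℓ) ∧
      (H.ncard : ℝ) ≤ 2 * (ℓ : ℝ) / (h : ℝ) * (Fintype.card V : ℝ)) := by
  obtain ⟨G₀, hG₀, hdeg, hmax, hmin⟩ := G.exists_le_forall_cappedDegreeSum ℓ h
  by_cases hL : ({v | (G₀.neighborSet v).ncard < ℓ}.ncard : ℝ) < δ * Fintype.card V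
  · exact .inl ⟨G₀, hG₀, hdeg, hL⟩
  refine .inr ⟨{v | (G₀.neighborSet v).ncard < ℓ}, {v | (G₀.neighborSet v).ncard = h}, _,
    Set.union_compl_self _, Set.disjoint_left.2 fun v hv hv' ↦ ?_,
    disjoint_compl_right.mono_left Set.subset_union_left,
    disjoint_compl_right.mono_left Set.subset_union_right, not_lt.1 hL, fun v hv ↦ ?_, ?_⟩
  · simp only [Set.mem_ofPred_eq] at hv hv'
    omega
  · refine (Set.ncard_le_ncard fun u hu ↦ ?_).trans_lt hv
    exact SimpleGraph.adj_of_forall_cappedDegreeSum_le hh hG₀ hmax hdeg hu.1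
      ((hdeg u).lt_of_ne hu.2) hv
  · have hH := SimpleGraph.mul_ncard_setOf_ncard_neighborSet_eq_le
      (fun u v ↦ SimpleGraph.ncard_neighborSet_le_or_of_forall_lt_cappedDegreeSum hmin) h
    rw [div_mul_eq_mul_div, le_div_iff₀ (by exact_mod_cast (by omega : 0 < h))]
    exact_mod_cast (mul_comm _ _).trans_le hH

/-- Either G has a spanning subgraph G' of maximum degree at most h in which fewer than
δn vertices have degree less than ℓ, or V(G) can be partitioned into L, H, R with
|L| ≥ δn, every vertex of L having fewer than ℓ neighbors outside H, and |H| ≤ (2ℓ/h)n. -/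
theorem spanning_subgraph_or_partition {V : Type*} [Fintype V] (G : SimpleGraph V)
    (ℓ h : ℕ) (hℓ : 1 ≤ ℓ) (hh : ℓ ≤ h) (δ : ℝ) (hδ0 : 0 ≤ δ) (hδ1 : δ ≤ 1) :
    (∃ G' : SimpleGraph V, G' ≤ G ∧
      (∀ v, (G'.neighborSet v).ncard ≤ h) ∧
      ({v : V | (G'.neighborSet v).ncard < ℓ}.ncard : ℝ) < δ * (Fintype.card V : ℝ)) ∨
    (∃ L H R : Set V, L ∪ H ∪ R = Set.univ ∧
      Disjoint L H ∧ Disjoint L R ∧ Disjoint H R ∧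
      δ * (Fintype.card V : ℝ) ≤ (L.ncard : ℝ) ∧
      (∀ v ∈ L, ((G.neighborSet v) \ H).ncard < ℓ) ∧
      (H.ncard : ℝ) ≤ 2 * (ℓ : ℝ) / (h : ℝ) * (Fintype.card V : ℝ)) :=
  spanning_subgraph_or_partition_general G ℓ h hℓ hh δ
end

section
/- For every n ≥ 1, the sum of binomial coefficients C(n, i) for i from 0 to ⌊3n/10⌋ is at most 2^{0.882·n}. -/
/-!
Chernoff's trick: for `0 < x ≤ 1` and `i ≤ k` we have `x ^ k ≤ x ^ i`, so
`x ^ k * ∑_{i ≤ k} C(n, i) ≤ ∑_i x ^ i * C(n, i) = (1 + x) ^ n`. With `k ≤ α n` this gives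
`∑_{i ≤ k} C(n, i) ≤ ((1 + x) / x ^ α) ^ n`. The optimal choice `x = α / (1 - α) = 3 / 7` for
`α = 3 / 10` makes the base `2 ^ H(3 / 10)`, with binary entropy `H(3 / 10) ≈ 0.8813 < 0.882`.
-/

open Finset

theorem sum_range_pow_mul_choose_le {x : ℝ} (hx : 0 ≤ x) (n k : ℕ) :
    ∑ i ∈ range (k + 1), x ^ i * (n.choose i : ℝ) ≤ (x + 1) ^ n := by
  have binomial : (x + 1) ^ n = ∑ i ∈ range (n + 1), x ^ i * (n.choose i : ℝ) := by
    simp [add_pow]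
  rw [binomial]
  rcases le_total k n with _ | _
  · exact sum_le_sum_of_subset_of_nonneg (range_subset_range.mpr (by omega))
      fun i _ _ => by positivity
  · refine (sum_subset (range_subset_range.mpr (by omega)) fun i _ hin => ?_).ge
    rw [Nat.choose_eq_zero_of_lt (by simpa using hin), Nat.cast_zero, mul_zero]

theorem pow_mul_sum_range_choose_le {x : ℝ} (hx₀ : 0 ≤ x) (hx₁ : x ≤ 1) (n k : ℕ) :
    x ^ k * ∑ i ∈ range (k + 1), (n.choose i : ℝ) ≤ (x + 1) ^ n := by
  refine le_trans ?_ (sum_range_pow_mul_choose_le hx₀ n k)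
  rw [mul_sum]
  refine sum_le_sum fun i hi => mul_le_mul_of_nonneg_right ?_ (Nat.cast_nonneg _)
  exact pow_le_pow_of_le_one hx₀ hx₁ (Nat.lt_succ_iff.mp (mem_range.mp hi))

theorem sum_range_choose_le_rpow {x α : ℝ} (hx₀ : 0 < x) (hx₁ : x ≤ 1) {n k : ℕ}
    (hk : (k : ℝ) ≤ α * n) :
    ∑ i ∈ range (k + 1), (n.choose i : ℝ) ≤ ((x + 1) / x ^ α) ^ n := by
  have hxk : x ^ (α * n) ≤ x ^ k := by
    rw [← Real.rpow_natCast]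
    exact Real.rpow_le_rpow_of_exponent_ge hx₀ hx₁ hk
  calc ∑ i ∈ range (k + 1), (n.choose i : ℝ) ≤ (x + 1) ^ n / x ^ k := by
        rw [le_div_iff₀' (by positivity)]
        exact pow_mul_sum_range_choose_le hx₀.le hx₁ n k
    _ ≤ (x + 1) ^ n / x ^ (α * n) := by gcongr
    _ = ((x + 1) / x ^ α) ^ n := by
        rw [div_pow, Real.rpow_mul hx₀.le, Real.rpow_natCast]

-- Raising to the power `500` clears the denominators of `3 / 10` and `0.882 = 441 / 500`.
theorem three_sevenths_add_one_div_rpow_le :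
    (3 / 7 + 1 : ℝ) / (3 / 7) ^ (3 / 10 : ℝ) ≤ 2 ^ (0.882 : ℝ) := by
  have key : (10 : ℕ) ^ 500 ≤ 2 ^ 441 * 3 ^ 150 * 7 ^ 350 := by decide +kernel
  rw [← pow_le_pow_iff_left₀ (n := 500) (by positivity) (by positivity) (by norm_num),
    div_pow, ← Real.rpow_mul_natCast (by norm_num), ← Real.rpow_mul_natCast (by norm_num),
    show (3 / 10 : ℝ) * (500 : ℕ) = (150 : ℕ) by norm_num,
    show (0.882 : ℝ) * (500 : ℕ) = (441 : ℕ) by norm_num, Real.rpow_natCast, Real.rpow_natCast,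
    div_le_iff₀ (by positivity), show (3 / 7 + 1 : ℝ) = 10 / 7 by norm_num, div_pow, div_pow,
    div_le_iff₀ (by positivity)]
  calc (10 : ℝ) ^ 500 ≤ 2 ^ 441 * 3 ^ 150 * 7 ^ 350 := by exact_mod_cast key
    _ = _ := by field_simp

theorem sum_binomials_three_tenths_general (n : ℕ) :
    (∑ i ∈ Finset.range (3 * n / 10 + 1), (n.choose i : ℝ)) ≤
      (2 : ℝ) ^ ((0.882 : ℝ) * (n : ℝ)) := by
  have hk : ((3 * n / 10 : ℕ) : ℝ) ≤ 3 / 10 * n := by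
    simpa [mul_div_right_comm] using Nat.cast_div_le (α := ℝ) (m := 3 * n) (n := 10)
  calc ∑ i ∈ range (3 * n / 10 + 1), (n.choose i : ℝ)
      ≤ ((3 / 7 + 1) / (3 / 7) ^ (3 / 10 : ℝ)) ^ n :=
        sum_range_choose_le_rpow (by norm_num) (by norm_num) hk
    _ ≤ ((2 : ℝ) ^ (0.882 : ℝ)) ^ n := by gcongr; exact three_sevenths_add_one_div_rpow_le
    _ = (2 : ℝ) ^ ((0.882 : ℝ) * n) := by rw [Real.rpow_mul (by norm_num), Real.rpow_natCast]

/-- For every n ≥ 1, the sum of C(n,i) for i from 0 to ⌊3n/10⌋ is at most 2^(0.882·n). -/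
theorem sum_binomials_three_tenths (n : ℕ) (hn : 1 ≤ n) :
    (∑ i ∈ Finset.range (3 * n / 10 + 1), (n.choose i : ℝ)) ≤
      (2 : ℝ) ^ ((0.882 : ℝ) * (n : ℝ)) :=
  sum_binomials_three_tenths_general n
end

section
/- For every n ≥ 1, the sum of binomial coefficients C(n, i) for i from 0 to ⌊4n/10⌋ is at most 2^{n(1 - 1/100)}. -/
/-- For every n ≥ 1, the sum of C(n,i) for i from 0 to ⌊4n/10⌋ is at most 2^(n(1-1/100)). -/
theorem sum_binomials_four_tenths (n : ℕ) (hn : 1 ≤ n) :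
    (∑ i ∈ Finset.range (4 * n / 10 + 1), (n.choose i : ℝ)) ≤
      (2 : ℝ) ^ ((n : ℝ) * (1 - 1 / 100)) := by
  set k := 4 * n / 10 with hk
  have hkn : k ≤ n := by omega
  -- Step 1: bound the sum by (3/2)^k * (5/3)^n
  have h1 : (∑ i ∈ Finset.range (k + 1), (n.choose i : ℝ))
      ≤ (3 / 2 : ℝ) ^ k * ∑ i ∈ Finset.range (n + 1), (2 / 3 : ℝ) ^ i * n.choose i := by
    rw [Finset.mul_sum]
    refine le_trans (Finset.sum_le_sum ?_)
      (Finset.sum_le_sum_of_subset_of_nonneg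
        (Finset.range_subset_range.2 (by omega)) ?_)
    · intro i hi
      rw [Finset.mem_range] at hi
      have hik : i ≤ k := by omega
      have h2 : ((2 : ℝ) / 3) ^ k ≤ (2 / 3 : ℝ) ^ i :=
        pow_le_pow_of_le_one (by norm_num) (by norm_num) hik
      have h3 : (1 : ℝ) ≤ (3 / 2 : ℝ) ^ k * (2 / 3 : ℝ) ^ i := by
        calc (1 : ℝ) = (3 / 2 : ℝ) ^ k * (2 / 3 : ℝ) ^ k := by
              rw [← mul_pow]; norm_num
          _ ≤ _ := by
              have : (0:ℝ) ≤ (3/2:ℝ)^k := by positivity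
              nlinarith
      have hc : (0 : ℝ) ≤ (n.choose i : ℝ) := Nat.cast_nonneg _
      nlinarith
    · intro i _ _
      positivity
  have h2 : (∑ i ∈ Finset.range (n + 1), (2 / 3 : ℝ) ^ i * n.choose i)
      = (5 / 3 : ℝ) ^ n := by
    have h := add_pow (2 / 3 : ℝ) 1 n
    simp only [one_pow, mul_one] at h
    norm_num at h
    rw [← h]
  -- Step 2: (3/2)^k * (5/3)^n ≤ 2 ^ (n * 99/100)
  have h3 : (3 / 2 : ℝ) ^ k * (5 / 3 : ℝ) ^ n ≤ (2 : ℝ) ^ ((n : ℝ) * (1 - 1 / 100)) := by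
    have hL : (0 : ℝ) ≤ (3 / 2 : ℝ) ^ k * (5 / 3 : ℝ) ^ n := by positivity
    have hR : (0 : ℝ) ≤ (2 : ℝ) ^ ((n : ℝ) * (1 - 1 / 100)) :=
      (Real.rpow_pos_of_pos (by norm_num) _).le
    rw [← pow_le_pow_iff_left₀ hL hR (by norm_num : (100 : ℕ) ≠ 0)]
    have hRpow : ((2 : ℝ) ^ ((n : ℝ) * (1 - 1 / 100))) ^ (100 : ℕ)
        = (2 : ℝ) ^ (99 * n) := by
      rw [← Real.rpow_natCast ((2 : ℝ) ^ ((n : ℝ) * (1 - 1 / 100))) 100,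
        ← Real.rpow_mul (by norm_num)]
      have : (n : ℝ) * (1 - 1 / 100) * (100 : ℕ) = ((99 * n : ℕ) : ℝ) := by
        push_cast; ring
      rw [this, Real.rpow_natCast]
    rw [hRpow, mul_pow, ← pow_mul, ← pow_mul]
    have hkk : k * 100 ≤ 40 * n := by omega
    calc (3 / 2 : ℝ) ^ (k * 100) * (5 / 3 : ℝ) ^ (n * 100)
        ≤ (3 / 2 : ℝ) ^ (40 * n) * (5 / 3 : ℝ) ^ (n * 100) := by
          gcongr
          norm_num
      _ = ((3 / 2 : ℝ) ^ 40 * (5 / 3 : ℝ) ^ 100) ^ n := by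
          rw [mul_pow, ← pow_mul, ← pow_mul, mul_comm 40 n, mul_comm 100 n]
      _ ≤ ((2 : ℝ) ^ 99) ^ n := by
          gcongr ?_ ^ n
          rw [div_pow, div_pow, div_mul_div_comm, div_le_iff₀ (by positivity)]
          norm_num
      _ = (2 : ℝ) ^ (99 * n) := by rw [← pow_mul, mul_comm]
  calc (∑ i ∈ Finset.range (k + 1), (n.choose i : ℝ))
      ≤ (3 / 2 : ℝ) ^ k * ∑ i ∈ Finset.range (n + 1), (2 / 3 : ℝ) ^ i * n.choose i := h1
    _ = (3 / 2 : ℝ) ^ k * (5 / 3 : ℝ) ^ n := by rw [h2]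
    _ ≤ _ := h3
end

section
/- Let G be a graph, L ⊆ V(G), and R_small a set of vertices outside L, each of degree less than 10ℓ with all neighbors in L, where each vertex of L has fewer than ℓ neighbors in R_small. Then there exists a subset R' ⊆ R_small with |R'| ≥ |R_small|/(10ℓ²) such that no two vertices of R' share a common neighbor. -/
lemma scattered_aux {V : Type*} [Fintype V] [DecidableEq V]
    (G : SimpleGraph V) [DecidableRel G.Adj] (ℓ : ℕ) (hℓ : 1 ≤ ℓ)
    (L Rsmall : Finset V)
    (hdeg : ∀ r ∈ Rsmall, G.degree r < 10 * ℓ ∧ G.neighborFinset r ⊆ L)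
    (hL : ∀ v ∈ L, (Rsmall.filter fun r => G.Adj v r).card < ℓ) :
    ∀ n (S : Finset V), S.card = n → S ⊆ Rsmall →
      ∃ R' ⊆ S, S.card ≤ 10 * ℓ ^ 2 * R'.card ∧
        ∀ r ∈ R', ∀ r' ∈ R', r ≠ r' →
          Disjoint (G.neighborFinset r) (G.neighborFinset r') := by
  intro n
  induction n using Nat.strong_induction_on with
  | _ n ih =>
    intro S hcard hSR
    rcases S.eq_empty_or_nonempty with rfl | ⟨r, hr⟩
    · exact ⟨∅, Finset.Subset.refl _, by simp, by simp⟩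
    · have hrR : r ∈ Rsmall := hSR hr
      obtain ⟨hdr, hNL⟩ := hdeg r hrR
      set B : Finset V :=
        insert r (S.filter fun r' =>
          ¬ Disjoint (G.neighborFinset r) (G.neighborFinset r')) with hB
      have hBsub : S.filter (fun r' =>
          ¬ Disjoint (G.neighborFinset r) (G.neighborFinset r')) ⊆
          (G.neighborFinset r).biUnion (fun v => Rsmall.filter fun x => G.Adj v x) := by
        intro r' hr'
        rw [Finset.mem_filter] at hr'
        obtain ⟨hr'S, hnd⟩ := hr'
        rw [Finset.not_disjoint_iff] at hnd
        obtain ⟨v, hv1, hv2⟩ := hnd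
        refine Finset.mem_biUnion.2 ⟨v, hv1, Finset.mem_filter.2 ⟨hSR hr'S, ?_⟩⟩
        rw [SimpleGraph.mem_neighborFinset] at hv2
        exact hv2.symm
      have hBcard : B.card ≤ 10 * ℓ ^ 2 := by
        have h1 : ((G.neighborFinset r).biUnion
            (fun v => Rsmall.filter fun x => G.Adj v x)).card ≤
            (G.neighborFinset r).card * ℓ := by
          refine le_trans (Finset.card_biUnion_le) ?_
          refine le_trans (Finset.sum_le_card_nsmul _ _ ℓ ?_) (by simp [mul_comm])
          intro v hv
          exact le_of_lt (hL v (hNL hv))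
        have h2 : (G.neighborFinset r).card ≤ 10 * ℓ - 1 := by
          have := G.card_neighborFinset_eq_degree r
          omega
        have h3 : B.card ≤ 1 + (10 * ℓ - 1) * ℓ := by
          calc B.card ≤ _ + 1 := Finset.card_insert_le _ _
          _ ≤ (10 * ℓ - 1) * ℓ + 1 :=
            Nat.add_le_add_right (le_trans (Finset.card_le_card hBsub)
              (le_trans h1 (Nat.mul_le_mul_right _ h2))) 1
          _ = 1 + (10 * ℓ - 1) * ℓ := by ring
        obtain ⟨m, rfl⟩ : ∃ m, ℓ = m + 1 := ⟨ℓ - 1, by omega⟩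
        have heq : (10 * (m + 1) - 1) = 10 * m + 9 := by omega
        rw [heq] at h3
        nlinarith
      have hsub' : S \ B ⊆ S.erase r := by
        intro x hx
        rw [Finset.mem_sdiff] at hx
        refine Finset.mem_erase.2 ⟨?_, hx.1⟩
        rintro rfl; exact hx.2 (Finset.mem_insert_self _ _)
      have hSBlt : (S \ B).card < n := by
        have h4 := Finset.card_le_card hsub'
        have h5 := Finset.card_erase_of_mem hr
        have h6 : 1 ≤ S.card := Finset.card_pos.2 ⟨r, hr⟩
        omega
      obtain ⟨R'', hR''sub, hR''card, hR''pair⟩ :=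
        ih _ hSBlt (S \ B) rfl (le_trans (Finset.sdiff_subset) hSR)
      have hrnot : r ∉ R'' := fun h => (Finset.mem_sdiff.1 (hR''sub h)).2
        (Finset.mem_insert_self _ _)
      refine ⟨insert r R'', ?_, ?_, ?_⟩
      · intro x hx
        rcases Finset.mem_insert.1 hx with rfl | hx
        · exact hr
        · exact (Finset.mem_sdiff.1 (hR''sub hx)).1
      · rw [Finset.card_insert_of_notMem hrnot]
        have : S.card ≤ (S \ B).card + B.card := by
          have := Finset.card_le_card_sdiff_add_card (s := S) (t := B)
          omega
        calc S.card ≤ (S \ B).card + B.card := this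
          _ ≤ 10 * ℓ ^ 2 * R''.card + 10 * ℓ ^ 2 := by omega
          _ = 10 * ℓ ^ 2 * (R''.card + 1) := by ring
      · have hdisj' : ∀ x ∈ R'',
            Disjoint (G.neighborFinset r) (G.neighborFinset x) := by
          intro x hx
          have hxB := (Finset.mem_sdiff.1 (hR''sub hx)).2
          rw [hB, Finset.mem_insert, Finset.mem_filter] at hxB
          push_neg at hxB
          by_contra h
          exact h (hxB.2 (Finset.mem_sdiff.1 (hR''sub hx)).1)
        intro a ha b hb hab
        rcases Finset.mem_insert.1 ha with ha' | ha <;>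
          rcases Finset.mem_insert.1 hb with hb' | hb
        · exact absurd (ha'.trans hb'.symm) hab
        · rw [ha']; exact hdisj' b hb
        · rw [hb']; exact (hdisj' a ha).symm
        · exact hR''pair a ha b hb hab

/-- If every vertex of R_small has degree less than 10ℓ with all neighbors in L, and
every vertex of L has fewer than ℓ neighbors in R_small, then there exists R' ⊆ R_small
with |R'| ≥ |R_small|/(10ℓ²) such that no two vertices of R' share a common neighbor. -/
theorem exists_scattered_subset {V : Type*} [Fintype V] [DecidableEq V]
    (G : SimpleGraph V) [DecidableRel G.Adj] (ℓ : ℕ) (hℓ : 1 ≤ ℓ)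
    (L Rsmall : Finset V) (hdisj : Disjoint Rsmall L)
    (hdeg : ∀ r ∈ Rsmall, G.degree r < 10 * ℓ ∧ G.neighborFinset r ⊆ L)
    (hL : ∀ v ∈ L, (Rsmall.filter fun r => G.Adj v r).card < ℓ) :
    ∃ R' ⊆ Rsmall,
      (Rsmall.card : ℝ) / (10 * (ℓ : ℝ) ^ 2) ≤ (R'.card : ℝ) ∧
      ∀ r ∈ R', ∀ r' ∈ R', r ≠ r' →
        Disjoint (G.neighborFinset r) (G.neighborFinset r') := by
  obtain ⟨R', hsub, hcard, hpair⟩ :=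
    scattered_aux G ℓ hℓ L Rsmall hdeg hL Rsmall.card Rsmall rfl (Finset.Subset.refl _)
  refine ⟨R', hsub, ?_, hpair⟩
  rw [div_le_iff₀ (by positivity)]
  calc (Rsmall.card : ℝ) ≤ ((10 * ℓ ^ 2 * R'.card : ℕ) : ℝ) := by exact_mod_cast hcard
    _ = R'.card * (10 * (ℓ : ℝ) ^ 2) := by push_cast; ring
end
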